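/- In the two-group factor-model setup, suppose α₁ = α₂ = α and p₁(n)/p₂(n) → 0. Then a_{1,p₁(n)} / a_{2,p₂(n)} → 0 and, for every x > 0, P(Q_{p₁(n), p₂(n)} ≤ a_{2,p₂(n)} x) → Ψ_α(x) as n → ∞. (Proposition 2, Case 2, second subcase.) -/

import Mathlib

open MeasureTheory ProbabilityTheory Filter

noncomputable section

/-- The Fréchet distribution function with tail index `α`. -/
def frechetCDF (α x : ℝ) : ℝ := if 0 < x then Real.exp (-x ^ (-α)) else 0

/-- The norming constant `a_p = (Σ_{i<p} σ_i^α)^{1/α}`. -/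
def normConst (σ : ℕ → ℝ) (α : ℝ) (p : ℕ) : ℝ :=
  (∑ i ∈ Finset.range p, σ i ^ α) ^ (1 / α)

/-- Maximum of the first `p₁` variables of the first group and the first `p₂`
variables of the second group. -/
def Qmax {Ω : Type*} (X₁ X₂ : ℕ → Ω → ℝ) (p₁ p₂ : ℕ) (ω : Ω) : ℝ :=
  max (⨆ i : Fin p₁, X₁ i ω) (⨆ j : Fin p₂, X₂ j ω)

/-- Codomains of the family consisting of the factor `Z` and the two noise arrays. -/
def mixCodom (d : ℕ) : Unit ⊕ ℕ ⊕ ℕ → Type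
  | Sum.inl _ => Fin d → ℝ
  | Sum.inr _ => ℝ

instance mixCodomMeasurableSpace (d : ℕ) : ∀ i, MeasurableSpace (mixCodom d i)
  | Sum.inl _ => inferInstanceAs (MeasurableSpace (Fin d → ℝ))
  | Sum.inr (Sum.inl _) => inferInstanceAs (MeasurableSpace ℝ)
  | Sum.inr (Sum.inr _) => inferInstanceAs (MeasurableSpace ℝ)

/-- The family consisting of the factor `Z` and the two noise arrays. -/
def mixFun {Ω : Type*} {d : ℕ} (Z : Ω → Fin d → ℝ) (ε₁ ε₂ : ℕ → Ω → ℝ) :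
    ∀ i : Unit ⊕ ℕ ⊕ ℕ, Ω → mixCodom d i
  | Sum.inl _ => Z
  | Sum.inr (Sum.inl i) => ε₁ i
  | Sum.inr (Sum.inr j) => ε₂ j

open Topology Asymptotics Finset

/-!
Given `Z = z`, the noises are independent, so `P(Q ≤ t | Z = z)` is the product of the values
`F((t - f_i(z)) / σ_i)` of the noise distribution functions. Regular variation of the tails gives
`1 - F((t - c_i) / σ_i) ~ σ_i^α t^{-α}` as `t → ∞`, uniformly in `i` when the shifts `c_i` are
bounded and the scales `σ_i ∈ (0, C]`; together with `log (1 - u) ~ -u` this turns the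
product into `exp (-lim Σ σ_i^α / t^α)`. At the level `t = a_{2,p₂} x` the second group contributes
exactly `x^{-α}` and the first `(a_{1,p₁} / a_{2,p₂})^α x^{-α} → 0`, and dominated convergence in
`z` concludes.
-/

section UniformAsymptotics

/- Along `atTop ×ˢ ⊤` on `ℕ × ι`, limits and asymptotic equivalences are uniform in the second
coordinate (cf. `tendsto_prod_top_iff`). -/

variable {ι : Type*}

lemma tendsto_sum_of_isEquivalent {v w : ℕ × ι → ℝ} (hw : ∀ᶠ q in atTop ×ˢ ⊤, 0 ≤ w q)
    (hvw : v ~[atTop ×ˢ ⊤] w) {s : ℕ → Finset ι} {L : ℝ}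
    (hL : Tendsto (fun n => ∑ i ∈ s n, w (n, i)) atTop (𝓝 L)) :
    Tendsto (fun n => ∑ i ∈ s n, v (n, i)) atTop (𝓝 L) := by
  have hsmall : (fun n => ∑ i ∈ s n, v (n, i) - ∑ i ∈ s n, w (n, i)) =o[atTop]
      fun n => ∑ i ∈ s n, w (n, i) := by
    refine IsLittleO.of_bound fun c hc => ?_
    filter_upwards [mem_prod_top.1 ((hvw.isLittleO.def hc).and hw)] with n hn
    rw [← sum_sub_distrib, Real.norm_of_nonneg (sum_nonneg fun i _ => (hn i).2), mul_sum]
    refine (norm_sum_le _ _).trans (sum_le_sum fun i _ => ?_)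
    simpa [Real.norm_of_nonneg (hn i).2] using (hn i).1
  have hdiff := (isLittleO_one_iff ℝ).1 (hsmall.trans_isBigO (hL.isBigO_one ℝ))
  simpa using hdiff.add hL

lemma isEquivalent_neg_log_one_sub : (fun x : ℝ => -Real.log (1 - x)) ~[𝓝 0] id := by
  have h := (((hasDerivAt_id' (0 : ℝ)).const_sub 1).log (by norm_num)).neg
  norm_num [hasDerivAt_iff_isLittleO] at h
  exact h

lemma tendsto_prod_one_sub_of_tendsto_sum {u : ℕ × ι → ℝ} (hu0 : 0 ≤ u)
    (hu : Tendsto u (atTop ×ˢ ⊤) (𝓝 0)) {s : ℕ → Finset ι} {L : ℝ}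
    (hL : Tendsto (fun n => ∑ i ∈ s n, u (n, i)) atTop (𝓝 L)) :
    Tendsto (fun n => ∏ i ∈ s n, (1 - u (n, i))) atTop (𝓝 (Real.exp (-L))) := by
  have hlog : Tendsto (fun n => ∑ i ∈ s n, -Real.log (1 - u (n, i))) atTop (𝓝 L) :=
    tendsto_sum_of_isEquivalent (.of_forall hu0) (isEquivalent_neg_log_one_sub.comp_tendsto hu) hL
  have hlt : ∀ᶠ n in atTop, ∀ i, u (n, i) < 1 :=
    mem_prod_top.1 (hu.eventually (gt_mem_nhds one_pos))
  refine ((Real.continuous_exp.tendsto _).comp hlog.neg).congr' ?_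
  filter_upwards [hlt] with n hn
  simp [sum_neg_distrib, Real.exp_sum, Real.exp_log (sub_pos.2 (hn _))]

lemma tendsto_div_atTop_prod_top_of_abs_le {c : ι → ℝ} {M : ℝ} (hc : ∀ i, |c i| ≤ M) {t : ℕ → ℝ}
    (ht : Tendsto t atTop atTop) :
    Tendsto (fun q : ℕ × ι => c q.2 / t q.1) (atTop ×ˢ ⊤) (𝓝 0) := by
  have hM : Tendsto (fun n => M / |t n|) atTop (𝓝 0) :=
    tendsto_const_nhds.div_atTop (tendsto_abs_atTop_atTop.comp ht)
  refine squeeze_zero_norm (fun q => ?_) (hM.comp tendsto_fst)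
  simpa [norm_div] using div_le_div_of_nonneg_right (hc q.2) (abs_nonneg (t q.1))

lemma isEquivalent_tail_shift_div {T : ℝ → ℝ} {α : ℝ}
    (hT : Tendsto (fun y => y ^ α * T y) atTop (𝓝 1)) {C : ℝ} (hC : 0 < C) {σ : ι → ℝ}
    (hσ : ∀ i, σ i ∈ Set.Ioc 0 C) {M : ℝ} {c : ι → ℝ} (hc : ∀ i, |c i| ≤ M) {t : ℕ → ℝ}
    (ht : Tendsto t atTop atTop) :
    (fun q : ℕ × ι => T ((t q.1 - c q.2) / σ q.2)) ~[atTop ×ˢ ⊤]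
      fun q => σ q.2 ^ α / t q.1 ^ α := by
  set y : ℕ × ι → ℝ := fun q => (t q.1 - c q.2) / σ q.2
  have hbig : ∀ᶠ q : ℕ × ι in atTop ×ˢ ⊤, M < t q.1 := (ht.eventually_gt_atTop M).prod_inl ⊤
  have hy : Tendsto y (atTop ×ˢ ⊤) atTop := by
    refine tendsto_atTop_mono' _ ?_
      (((tendsto_atTop_add_const_right _ (-M) ht).atTop_div_const hC).comp tendsto_fst)
    filter_upwards [hbig] with q hq
    obtain ⟨hσ0, hσC⟩ := hσ q.2
    calc (t q.1 + -M) / C ≤ (t q.1 - M) / σ q.2 := by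
          rw [← sub_eq_add_neg]; exact div_le_div_of_nonneg_left (by linarith) hσ0 hσC
      _ ≤ y q := div_le_div_of_nonneg_right
          (by linarith [(le_abs_self (c q.2)).trans (hc q.2)]) hσ0.le
  have hshift : Tendsto (fun q => (1 - c q.2 / t q.1)⁻¹ ^ α) (atTop ×ˢ ⊤) (𝓝 1) := by
    have h := (tendsto_const_nhds (x := (1 : ℝ))).sub (tendsto_div_atTop_prod_top_of_abs_le hc ht)
    rw [sub_zero] at h
    simpa using (h.inv₀ one_ne_zero).rpow_const (p := α) (Or.inl (by norm_num))
  -- `T y * t ^ α / σ ^ α = y ^ α * T y * (t / (t - c)) ^ α` because `y = (t - c) / σ`.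
  have hlim : Tendsto (fun q => y q ^ α * T (y q) * (1 - c q.2 / t q.1)⁻¹ ^ α)
      (atTop ×ˢ ⊤) (𝓝 1) := by
    simpa using (hT.comp hy).mul hshift
  refine isEquivalent_of_tendsto_one (hlim.congr' ?_)
  filter_upwards [hbig] with q hq
  obtain ⟨hσ0, -⟩ := hσ q.2
  have htc : 0 < t q.1 - c q.2 := by linarith [(le_abs_self (c q.2)).trans (hc q.2)]
  have ht0 : 0 < t q.1 := by linarith [abs_nonneg (c q.2), hc q.2]
  have hinv : (1 - c q.2 / t q.1)⁻¹ = t q.1 / (t q.1 - c q.2) := by field_simp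
  simp only [y, Pi.div_apply, hinv]
  rw [Real.div_rpow htc.le hσ0.le, Real.div_rpow ht0.le htc.le]
  have : 0 < (t q.1 - c q.2) ^ α := Real.rpow_pos_of_pos htc α
  have : 0 < σ q.2 ^ α := Real.rpow_pos_of_pos hσ0 α
  have : 0 < t q.1 ^ α := Real.rpow_pos_of_pos ht0 α
  field_simp

lemma tendsto_prod_cdf {μ : Measure ℝ} {α : ℝ} (hα : 0 < α)
    (htail : Tendsto (fun y => y ^ α * (1 - cdf μ y)) atTop (𝓝 1)) {C : ℝ} (hC : 0 < C)
    {σ : ι → ℝ} (hσ : ∀ i, σ i ∈ Set.Ioc 0 C) {M : ℝ} {c : ι → ℝ} (hc : ∀ i, |c i| ≤ M)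
    {t : ℕ → ℝ} (ht : Tendsto t atTop atTop) {s : ℕ → Finset ι} {L : ℝ}
    (hL : Tendsto (fun n => (∑ i ∈ s n, σ i ^ α) / t n ^ α) atTop (𝓝 L)) :
    Tendsto (fun n => ∏ i ∈ s n, cdf μ ((t n - c i) / σ i)) atTop (𝓝 (Real.exp (-L))) := by
  have hequiv := isEquivalent_tail_shift_div htail hC hσ hc ht
  have hw0 : ∀ᶠ q : ℕ × ι in atTop ×ˢ ⊤, 0 ≤ σ q.2 ^ α / t q.1 ^ α :=
    ((ht.eventually_ge_atTop 0).prod_inl ⊤).mono fun q hq =>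
      div_nonneg (Real.rpow_nonneg (hσ q.2).1.le α) (Real.rpow_nonneg hq α)
  have hw : Tendsto (fun q : ℕ × ι => σ q.2 ^ α / t q.1 ^ α) (atTop ×ˢ ⊤) (𝓝 0) := by
    have hdecay : Tendsto (fun n => C ^ α / t n ^ α) atTop (𝓝 0) :=
      tendsto_const_nhds.div_atTop ((tendsto_rpow_atTop hα).comp ht)
    refine squeeze_zero' hw0 (((ht.eventually_ge_atTop 0).prod_inl ⊤).mono fun q hq => ?_)
      (hdecay.comp tendsto_fst)
    exact div_le_div_of_nonneg_right (Real.rpow_le_rpow (hσ q.2).1.le (hσ q.2).2 hα.le)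
      (Real.rpow_nonneg hq α)
  have hprod := tendsto_prod_one_sub_of_tendsto_sum (fun q => sub_nonneg.2 (cdf_le_one μ _))
    (hequiv.symm.tendsto_nhds hw)
    (tendsto_sum_of_isEquivalent hw0 hequiv (by simpa [sum_div] using hL))
  simpa using hprod

end UniformAsymptotics

section NormConst

variable {σ : ℕ → ℝ} {α : ℝ}

lemma normConst_nonneg (hσ : ∀ i, 0 ≤ σ i) (p : ℕ) : 0 ≤ normConst σ α p :=
  Real.rpow_nonneg (sum_nonneg fun i _ => Real.rpow_nonneg (hσ i) α) _

lemma sum_rpow_div_rpow_eq (hσ : ∀ i, 0 ≤ σ i) (hα : α ≠ 0) (p : ℕ) {t : ℝ} (ht : 0 ≤ t) :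
    (∑ i ∈ range p, σ i ^ α) / t ^ α = (normConst σ α p / t) ^ α := by
  rw [Real.div_rpow (normConst_nonneg hσ p) ht, normConst, one_div,
    Real.rpow_inv_rpow (sum_nonneg fun i _ => Real.rpow_nonneg (hσ i) α) hα]

lemma normConst_const (hα : 0 < α) {C : ℝ} (hC : 0 ≤ C) (p : ℕ) :
    normConst (fun _ => C) α p = C * (p : ℝ) ^ (1 / α) := by
  rw [normConst, sum_const, card_range, nsmul_eq_mul, Real.mul_rpow (Nat.cast_nonneg p)
    (Real.rpow_nonneg hC α), one_div, Real.rpow_rpow_inv hC hα.ne', mul_comm]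

lemma normConst_mono (hα : 0 < α) {τ : ℕ → ℝ} (hσ : ∀ i, 0 ≤ σ i) (hστ : ∀ i, σ i ≤ τ i)
    (p : ℕ) : normConst σ α p ≤ normConst τ α p :=
  Real.rpow_le_rpow (sum_nonneg fun i _ => Real.rpow_nonneg (hσ i) α)
    (sum_le_sum fun i _ => Real.rpow_le_rpow (hσ i) (hστ i) hα.le) (by positivity)

lemma normConst_pos (hα : 0 < α) {C : ℝ} (hC : 0 < C) (hσ : ∀ i, C ≤ σ i) {p : ℕ} (hp : 0 < p) :
    0 < normConst σ α p := by
  refine lt_of_lt_of_le ?_ (normConst_mono hα (fun _ => hC.le) hσ p)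
  rw [normConst_const hα hC.le]
  positivity

lemma tendsto_normConst_div_normConst (hα : 0 < α) {σt : ℕ → ℝ} {C₁ C₂ : ℝ} (hC₁ : 0 < C₁)
    (hσ : ∀ i, σ i ∈ Set.Icc 0 C₂) (hσt : ∀ j, C₁ ≤ σt j) {p₁ p₂ : ℕ → ℕ}
    (hp₂ : ∀ n, 0 < p₂ n) (hratio : Tendsto (fun n => (p₁ n : ℝ) / (p₂ n : ℝ)) atTop (𝓝 0)) :
    Tendsto (fun n => normConst σ α (p₁ n) / normConst σt α (p₂ n)) atTop (𝓝 0) := by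
  have hC₂ : 0 ≤ C₂ := (hσ 0).1.trans (hσ 0).2
  have hbound (n : ℕ) : normConst σ α (p₁ n) / normConst σt α (p₂ n) ≤
      C₂ / C₁ * ((p₁ n : ℝ) / p₂ n) ^ (1 / α) := by
    calc normConst σ α (p₁ n) / normConst σt α (p₂ n)
        ≤ normConst (fun _ => C₂) α (p₁ n) / normConst (fun _ => C₁) α (p₂ n) :=
          div_le_div₀ (normConst_nonneg (fun _ => hC₂) _)
            (normConst_mono hα (fun i => (hσ i).1) (fun i => (hσ i).2) _)
            (by have := hp₂ n; rw [normConst_const hα hC₁.le]; positivity)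
            (normConst_mono hα (fun _ => hC₁.le) hσt _)
      _ = C₂ / C₁ * ((p₁ n : ℝ) / p₂ n) ^ (1 / α) := by
          rw [normConst_const hα hC₂, normConst_const hα hC₁.le,
            Real.div_rpow (Nat.cast_nonneg _) (Nat.cast_nonneg _)]
          field_simp
  have hlim := (hratio.rpow_const (p := 1 / α) (Or.inr (by positivity))).const_mul (C₂ / C₁)
  rw [Real.zero_rpow (by positivity), mul_zero] at hlim
  exact squeeze_zero (fun n => div_nonneg (normConst_nonneg (fun i => (hσ i).1) _)
    (normConst_nonneg (fun j => hC₁.le.trans (hσt j)) _)) hbound hlim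

lemma tendsto_normConst_atTop (hα : 0 < α) {C : ℝ} (hC : 0 < C) (hσ : ∀ i, C ≤ σ i)
    {p : ℕ → ℕ} (hp : Tendsto (fun n => (p n : ℝ)) atTop atTop) :
    Tendsto (fun n => normConst σ α (p n)) atTop atTop := by
  refine tendsto_atTop_mono (fun n => ?_)
    (((tendsto_rpow_atTop (one_div_pos.2 hα)).comp hp).const_mul_atTop hC)
  rw [Function.comp_apply, ← normConst_const hα hC.le]
  exact normConst_mono hα (fun _ => hC.le) hσ _

end NormConst

section CondMaxCDF

variable {E : Type*}

/-- `P(Q_{q₁,q₂} ≤ t | Z = z)` when the noises have laws `μ₁`, `μ₂`. -/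
def condMaxCDF (μ₁ μ₂ : Measure ℝ) (f g : ℕ → E → ℝ) (σ σt : ℕ → ℝ) (q₁ q₂ : ℕ) (t : ℝ)
    (z : E) : ℝ :=
  (∏ i ∈ range q₁, cdf μ₁ ((t - f i z) / σ i)) * ∏ j ∈ range q₂, cdf μ₂ ((t - g j z) / σt j)

variable {μ₁ μ₂ : Measure ℝ} {f g : ℕ → E → ℝ} {σ σt : ℕ → ℝ} {q₁ q₂ : ℕ} {t : ℝ}

lemma condMaxCDF_nonneg (z : E) : 0 ≤ condMaxCDF μ₁ μ₂ f g σ σt q₁ q₂ t z :=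
  mul_nonneg (prod_nonneg fun _ _ => cdf_nonneg _ _) (prod_nonneg fun _ _ => cdf_nonneg _ _)

lemma condMaxCDF_le_one (z : E) : condMaxCDF μ₁ μ₂ f g σ σt q₁ q₂ t z ≤ 1 :=
  mul_le_one₀ (prod_le_one (fun _ _ => cdf_nonneg _ _) fun _ _ => cdf_le_one _ _)
    (prod_nonneg fun _ _ => cdf_nonneg _ _)
    (prod_le_one (fun _ _ => cdf_nonneg _ _) fun _ _ => cdf_le_one _ _)

lemma measurable_condMaxCDF [MeasurableSpace E] (hf : ∀ i, Measurable (f i))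
    (hg : ∀ j, Measurable (g j)) : Measurable (condMaxCDF μ₁ μ₂ f g σ σt q₁ q₂ t) :=
  (measurable_prod _ fun i _ => (monotone_cdf μ₁).measurable.comp
      ((measurable_const.sub (hf i)).div_const _)).mul
    (measurable_prod _ fun j _ => (monotone_cdf μ₂).measurable.comp
      ((measurable_const.sub (hg j)).div_const _))

end CondMaxCDF

-- `⨆` over the empty type `Fin 0` is `0` in `ℝ`.
lemma Qmax_le_iff {Ω : Type*} {X₁ X₂ : ℕ → Ω → ℝ} {q₁ q₂ : ℕ} (hq₁ : 0 < q₁) (hq₂ : 0 < q₂)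
    {ω : Ω} {t : ℝ} :
    Qmax X₁ X₂ q₁ q₂ ω ≤ t ↔ (∀ i < q₁, X₁ i ω ≤ t) ∧ ∀ j < q₂, X₂ j ω ≤ t := by
  have : Nonempty (Fin q₁) := ⟨⟨0, hq₁⟩⟩
  have : Nonempty (Fin q₂) := ⟨⟨0, hq₂⟩⟩
  simp [Qmax, ciSup_le_iff (Set.finite_range _).bddAbove, Fin.forall_iff]

section CDF

variable {Ω : Type*} [MeasurableSpace Ω] {P : Measure Ω} [IsProbabilityMeasure P] {X : Ω → ℝ}

lemma cdf_map_eq_measureReal (hX : Measurable X) (b : ℝ) :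
    cdf (P.map X) b = P.real {ω | X ω ≤ b} := by
  have := Measure.isProbabilityMeasure_map (μ := P) hX.aemeasurable
  rw [cdf_eq_real, map_measureReal_apply hX measurableSet_Iic]
  rfl

lemma one_sub_cdf_map_eq_measureReal (hX : Measurable X) (b : ℝ) :
    1 - cdf (P.map X) b = P.real {ω | b < X ω} := by
  rw [cdf_map_eq_measureReal hX, ← probReal_compl_eq_one_sub (measurableSet_le hX measurable_const)]
  congr 1
  ext ω
  simp

end CDF

theorem ProbabilityTheory.IndepFun.measure_preimage_eq_lintegral {Ω α β : Type*}
    [MeasurableSpace Ω] [MeasurableSpace α] [MeasurableSpace β] {P : Measure Ω}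
    [IsFiniteMeasure P] {X : Ω → α} {Y : Ω → β} (hXY : IndepFun X Y P) (hX : Measurable X)
    (hY : Measurable Y) {s : Set (α × β)} (hs : MeasurableSet s) :
    P ((fun ω => (X ω, Y ω)) ⁻¹' s) = ∫⁻ x, P.map Y (Prod.mk x ⁻¹' s) ∂P.map X := by
  rw [← Measure.map_apply (hX.prodMk hY) hs,
    (indepFun_iff_map_prod_eq_prod_map_map hX.aemeasurable hY.aemeasurable).1 hXY,
    Measure.prod_apply hs]

section FactorModel

variable {Ω : Type*} [MeasurableSpace Ω] {P : Measure Ω} {d : ℕ} {Z : Ω → Fin d → ℝ}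
  {f g : ℕ → (Fin d → ℝ) → ℝ} {σ σt : ℕ → ℝ} {ε₁ ε₂ : ℕ → Ω → ℝ} {X₁ X₂ : ℕ → Ω → ℝ}

lemma indepFun_factor_noise (hZ : Measurable Z) (hε₁ : ∀ i, Measurable (ε₁ i))
    (hε₂ : ∀ j, Measurable (ε₂ j))
    (hindep : iIndepFun (m := fun i => mixCodomMeasurableSpace d i) (mixFun Z ε₁ ε₂) P) :
    IndepFun Z (fun ω => (fun i => ε₁ i ω, fun j => ε₂ j ω)) P := by
  have hmeas : ∀ k, Measurable[_, mixCodomMeasurableSpace d k] (mixFun Z ε₁ ε₂ k) := by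
    rintro (_ | i | j)
    exacts [hZ, hε₁ i, hε₂ j]
  set mNoise := ⨆ k ∈ Set.range Sum.inr, (mixCodomMeasurableSpace d k).comap (mixFun Z ε₁ ε₂ k)
  have h := indep_iSup_of_disjoint (fun k => (hmeas k).comap_le) hindep.iIndep
    (S := {Sum.inl ()}) (T := Set.range Sum.inr) (by simp)
  have hW : Measurable[mNoise] fun ω => (fun i => ε₁ i ω, fun j => ε₂ j ω) := by
    refine Measurable.prodMk (@measurable_pi_lambda _ _ _ mNoise _ _ fun i => ?_)
      (@measurable_pi_lambda _ _ _ mNoise _ _ fun j => ?_)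
    · exact (comap_measurable (ε₁ i)).mono
        (le_iSup₂_of_le (Sum.inr (Sum.inl i)) ⟨_, rfl⟩ le_rfl) le_rfl
    · exact (comap_measurable (ε₂ j)).mono
        (le_iSup₂_of_le (Sum.inr (Sum.inr j)) ⟨_, rfl⟩ le_rfl) le_rfl
  rw [IndepFun_iff_Indep]
  exact indep_of_indep_of_le_right
    (indep_of_indep_of_le_left h (le_iSup₂_of_le (Sum.inl ()) rfl le_rfl)) hW.comap_le

lemma measure_noise_le_eq_prod
    (hindep : iIndepFun (m := fun i => mixCodomMeasurableSpace d i) (mixFun Z ε₁ ε₂) P)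
    (q₁ q₂ : ℕ) (b₁ b₂ : ℕ → ℝ) :
    P {ω | (∀ i < q₁, ε₁ i ω ≤ b₁ i) ∧ ∀ j < q₂, ε₂ j ω ≤ b₂ j} =
      (∏ i ∈ range q₁, P {ω | ε₁ i ω ≤ b₁ i}) * ∏ j ∈ range q₂, P {ω | ε₂ j ω ≤ b₂ j} := by
  have h := (hindep.precomp Sum.inr_injective).meas_biInter
    (S := (range q₁).disjSum (range q₂))
    (s := Sum.elim (fun i => {ω | ε₁ i ω ≤ b₁ i}) (fun j => {ω | ε₂ j ω ≤ b₂ j}))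
    (by
      rintro (i | j) _
      exacts [⟨_, (measurableSet_Iic : MeasurableSet (Set.Iic (b₁ i))), rfl⟩,
        ⟨_, (measurableSet_Iic : MeasurableSet (Set.Iic (b₂ j))), rfl⟩])
  rw [prod_disjSum] at h
  simp only [Sum.elim_inl, Sum.elim_inr] at h
  convert h using 2
  ext ω
  simp [Set.mem_iInter, Finset.mem_disjSum]

lemma measureReal_Qmax_le_eq_integral [IsProbabilityMeasure P] (hZ : Measurable Z)
    (hf : ∀ i, Measurable (f i)) (hg : ∀ j, Measurable (g j)) (hσ : ∀ i, 0 < σ i)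
    (hσt : ∀ j, 0 < σt j)
    (hε₁ : ∀ i, Measurable (ε₁ i)) (hε₂ : ∀ j, Measurable (ε₂ j))
    (hid₁ : ∀ i, IdentDistrib (ε₁ i) (ε₁ 0) P P) (hid₂ : ∀ j, IdentDistrib (ε₂ j) (ε₂ 0) P P)
    (hindep : iIndepFun (m := fun i => mixCodomMeasurableSpace d i) (mixFun Z ε₁ ε₂) P)
    (hX₁ : ∀ i ω, X₁ i ω = f i (Z ω) + σ i * ε₁ i ω)
    (hX₂ : ∀ j ω, X₂ j ω = g j (Z ω) + σt j * ε₂ j ω)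
    {q₁ q₂ : ℕ} (hq₁ : 0 < q₁) (hq₂ : 0 < q₂) (t : ℝ) :
    P.real {ω | Qmax X₁ X₂ q₁ q₂ ω ≤ t} =
      ∫ ω, condMaxCDF (P.map (ε₁ 0)) (P.map (ε₂ 0)) f g σ σt q₁ q₂ t (Z ω) ∂P := by
  set W : Ω → (ℕ → ℝ) × (ℕ → ℝ) := fun ω => (fun i => ε₁ i ω, fun j => ε₂ j ω)
  have hW : Measurable W := (measurable_pi_lambda _ hε₁).prodMk (measurable_pi_lambda _ hε₂)
  set B : Set ((Fin d → ℝ) × (ℕ → ℝ) × (ℕ → ℝ)) := {p |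
    (∀ i < q₁, p.2.1 i ≤ (t - f i p.1) / σ i) ∧ ∀ j < q₂, p.2.2 j ≤ (t - g j p.1) / σt j}
  have hB : MeasurableSet B := by
    simp only [B, Set.ofPred_and, Set.ofPred_forall]
    exact .inter (.iInter fun i => .iInter fun _ => measurableSet_le (by fun_prop)
        ((((hf i).comp measurable_fst).const_sub t).div_const (σ i)))
      (.iInter fun j => .iInter fun _ => measurableSet_le (by fun_prop)
        ((((hg j).comp measurable_fst).const_sub t).div_const (σt j)))
  have hevent : {ω | Qmax X₁ X₂ q₁ q₂ ω ≤ t} = (fun ω => (Z ω, W ω)) ⁻¹' B := by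
    ext ω
    simp only [Set.mem_ofPred_eq, Set.mem_preimage, B, W, Qmax_le_iff hq₁ hq₂, hX₁, hX₂,
      le_div_iff₀ (hσ _), le_div_iff₀ (hσt _), ← le_sub_iff_add_le', mul_comm]
  have hslice (z : Fin d → ℝ) : P.map W (Prod.mk z ⁻¹' B) =
      ENNReal.ofReal (condMaxCDF (P.map (ε₁ 0)) (P.map (ε₂ 0)) f g σ σt q₁ q₂ t z) := by
    rw [Measure.map_apply hW (measurable_prodMk_left hB)]
    simp only [Set.preimage, Set.mem_ofPred_eq, B, W]
    rw [measure_noise_le_eq_prod hindep, condMaxCDF, ENNReal.ofReal_mul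
      (prod_nonneg fun _ _ => cdf_nonneg _ _), ENNReal.ofReal_prod_of_nonneg
      (fun _ _ => cdf_nonneg _ _), ENNReal.ofReal_prod_of_nonneg (fun _ _ => cdf_nonneg _ _)]
    congr 1 <;> refine prod_congr rfl fun i _ => ?_
    · rw [← (hid₁ i).map_eq, cdf_map_eq_measureReal (hε₁ i), ofReal_measureReal]
    · rw [← (hid₂ i).map_eq, cdf_map_eq_measureReal (hε₂ i), ofReal_measureReal]
  have hint : Integrable
      (fun ω => condMaxCDF (P.map (ε₁ 0)) (P.map (ε₂ 0)) f g σ σt q₁ q₂ t (Z ω)) P :=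
    (integrable_const 1).mono' ((measurable_condMaxCDF hf hg).comp hZ).aestronglyMeasurable
      (.of_forall fun ω => by
        simpa [abs_of_nonneg (condMaxCDF_nonneg _)] using condMaxCDF_le_one _)
  rw [measureReal_def, hevent,
    (indepFun_factor_noise hZ hε₁ hε₂ hindep).measure_preimage_eq_lintegral hZ hW hB,
    lintegral_congr hslice, lintegral_map (measurable_condMaxCDF hf hg).ennreal_ofReal hZ,
    ← ofReal_integral_eq_lintegral_ofReal hint (.of_forall fun _ => condMaxCDF_nonneg _),
    ENNReal.toReal_ofReal (integral_nonneg fun _ => condMaxCDF_nonneg _)]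

theorem tendsto_measureReal_Qmax_le [IsProbabilityMeasure P] (hZ : Measurable Z)
    (hf : ∀ i, Measurable (f i)) (hg : ∀ j, Measurable (g j))
    (hfbdd : ∀ᵐ ω ∂P, ∃ M : ℝ, ∀ i, |f i (Z ω)| ≤ M)
    (hgbdd : ∀ᵐ ω ∂P, ∃ M : ℝ, ∀ j, |g j (Z ω)| ≤ M) {C : ℝ} (hC : 0 < C)
    (hσ : ∀ i, σ i ∈ Set.Ioc 0 C) (hσt : ∀ j, σt j ∈ Set.Ioc 0 C)
    (hε₁ : ∀ i, Measurable (ε₁ i)) (hε₂ : ∀ j, Measurable (ε₂ j))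
    (hid₁ : ∀ i, IdentDistrib (ε₁ i) (ε₁ 0) P P) (hid₂ : ∀ j, IdentDistrib (ε₂ j) (ε₂ 0) P P)
    (hindep : iIndepFun (m := fun i => mixCodomMeasurableSpace d i) (mixFun Z ε₁ ε₂) P)
    {α₁ α₂ : ℝ} (hα₁ : 0 < α₁) (hα₂ : 0 < α₂)
    (htail₁ : Tendsto (fun y => y ^ α₁ * P.real {ω | y < ε₁ 0 ω}) atTop (𝓝 1))
    (htail₂ : Tendsto (fun y => y ^ α₂ * P.real {ω | y < ε₂ 0 ω}) atTop (𝓝 1))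
    (hX₁ : ∀ i ω, X₁ i ω = f i (Z ω) + σ i * ε₁ i ω)
    (hX₂ : ∀ j ω, X₂ j ω = g j (Z ω) + σt j * ε₂ j ω)
    {p₁ p₂ : ℕ → ℕ} (hp₁ : ∀ n, 0 < p₁ n) (hp₂ : ∀ n, 0 < p₂ n) {t : ℕ → ℝ}
    (ht : Tendsto t atTop atTop) {L₁ L₂ : ℝ}
    (hL₁ : Tendsto (fun n => (∑ i ∈ range (p₁ n), σ i ^ α₁) / t n ^ α₁) atTop (𝓝 L₁))
    (hL₂ : Tendsto (fun n => (∑ j ∈ range (p₂ n), σt j ^ α₂) / t n ^ α₂) atTop (𝓝 L₂)) :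
    Tendsto (fun n => P.real {ω | Qmax X₁ X₂ (p₁ n) (p₂ n) ω ≤ t n}) atTop
      (𝓝 (Real.exp (-L₁) * Real.exp (-L₂))) := by
  simp only [measureReal_Qmax_le_eq_integral hZ hf hg (fun i => (hσ i).1) (fun j => (hσt j).1)
    hε₁ hε₂ hid₁ hid₂ hindep hX₁ hX₂ (hp₁ _) (hp₂ _)]
  have htail₁' : Tendsto (fun y => y ^ α₁ * (1 - cdf (P.map (ε₁ 0)) y)) atTop (𝓝 1) := by
    simpa only [one_sub_cdf_map_eq_measureReal (hε₁ 0)] using htail₁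
  have htail₂' : Tendsto (fun y => y ^ α₂ * (1 - cdf (P.map (ε₂ 0)) y)) atTop (𝓝 1) := by
    simpa only [one_sub_cdf_map_eq_measureReal (hε₂ 0)] using htail₂
  have hlim := tendsto_integral_of_dominated_convergence (μ := P)
    (F := fun n ω => condMaxCDF (P.map (ε₁ 0)) (P.map (ε₂ 0)) f g σ σt (p₁ n) (p₂ n) (t n) (Z ω))
    (f := fun _ => Real.exp (-L₁) * Real.exp (-L₂)) (fun _ => 1)
    (fun n => ((measurable_condMaxCDF hf hg).comp hZ).aestronglyMeasurable) (integrable_const 1)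
    (fun n => .of_forall fun ω => by
      simpa [abs_of_nonneg (condMaxCDF_nonneg _)] using condMaxCDF_le_one _)
    (by
      filter_upwards [hfbdd, hgbdd] with ω ⟨M₁, hM₁⟩ ⟨M₂, hM₂⟩
      exact (tendsto_prod_cdf hα₁ htail₁' hC hσ hM₁ ht hL₁).mul
        (tendsto_prod_cdf hα₂ htail₂' hC hσt hM₂ ht hL₂))
  simpa using hlim

end FactorModel

theorem prop2_case2_sub2_general
    {Ω : Type*} [MeasurableSpace Ω] (P : Measure Ω) [IsProbabilityMeasure P]
    (d : ℕ) (Z : Ω → Fin d → ℝ) (hZm : Measurable Z)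
    (f g : ℕ → (Fin d → ℝ) → ℝ) (hfm : ∀ i, Measurable (f i)) (hgm : ∀ j, Measurable (g j))
    (hfbdd : ∀ᵐ ω ∂P, ∃ M : ℝ, ∀ i, |f i (Z ω)| ≤ M)
    (hgbdd : ∀ᵐ ω ∂P, ∃ M : ℝ, ∀ j, |g j (Z ω)| ≤ M)
    (C₁ C₂ : ℝ) (hC₁ : 0 < C₁) (hC₁₂ : C₁ ≤ C₂)
    (σ σt : ℕ → ℝ) (hσ : ∀ i, σ i ∈ Set.Icc C₁ C₂) (hσt : ∀ j, σt j ∈ Set.Icc C₁ C₂)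
    (α₁ α₂ : ℝ) (hα₁ : 0 < α₁) (hα₂ : 0 < α₂)
    (ε₁ ε₂ : ℕ → Ω → ℝ) (hε₁m : ∀ i, Measurable (ε₁ i)) (hε₂m : ∀ j, Measurable (ε₂ j))
    (hid₁ : ∀ i, IdentDistrib (ε₁ i) (ε₁ 0) P P)
    (hid₂ : ∀ j, IdentDistrib (ε₂ j) (ε₂ 0) P P)
    (hindep : iIndepFun (m := fun i => mixCodomMeasurableSpace d i) (mixFun Z ε₁ ε₂) P)
    (htail₁ : Tendsto (fun x : ℝ => x ^ α₁ * (P {ω | x < ε₁ 0 ω}).toReal) atTop (nhds 1))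
    (htail₂ : Tendsto (fun x : ℝ => x ^ α₂ * (P {ω | x < ε₂ 0 ω}).toReal) atTop (nhds 1))
    (X₁ X₂ : ℕ → Ω → ℝ)
    (hX₁ : ∀ i ω, X₁ i ω = f i (Z ω) + σ i * ε₁ i ω)
    (hX₂ : ∀ j ω, X₂ j ω = g j (Z ω) + σt j * ε₂ j ω)
    (p₁ p₂ : ℕ → ℕ) (hp₁pos : ∀ n, 0 < p₁ n) (hp₂pos : ∀ n, 0 < p₂ n)
    (hp₂ : Tendsto (fun n => (p₂ n : ℝ)) atTop atTop)
    (α : ℝ) (hα₁α : α₁ = α) (hα₂α : α₂ = α)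
    (hratio : Tendsto (fun n => (p₁ n : ℝ) / (p₂ n : ℝ)) atTop (nhds 0)) :
    Tendsto (fun n => normConst σ α₁ (p₁ n) / normConst σt α₂ (p₂ n)) atTop (nhds 0) ∧
    ∀ x : ℝ, 0 < x →
      Tendsto (fun n => (P {ω | Qmax X₁ X₂ (p₁ n) (p₂ n) ω ≤ normConst σt α₂ (p₂ n) * x}).toReal) atTop (nhds (frechetCDF α x)) := by
  subst α₁ α₂
  have hσ₀ (i : ℕ) : σ i ∈ Set.Ioc 0 C₂ := ⟨hC₁.trans_le (hσ i).1, (hσ i).2⟩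
  have hσt₀ (j : ℕ) : σt j ∈ Set.Ioc 0 C₂ := ⟨hC₁.trans_le (hσt j).1, (hσt j).2⟩
  have ha := tendsto_normConst_div_normConst hα₁ hC₁ (fun i => Set.Ioc_subset_Icc_self (hσ₀ i))
    (fun j => (hσt j).1) hp₂pos hratio
  refine ⟨ha, fun x hx => ?_⟩
  have ha₂ (n : ℕ) : 0 < normConst σt α (p₂ n) :=
    normConst_pos hα₁ hC₁ (fun j => (hσt j).1) (hp₂pos n)
  have ht : Tendsto (fun n => normConst σt α (p₂ n) * x) atTop atTop :=
    (tendsto_normConst_atTop hα₁ hC₁ (fun j => (hσt j).1) hp₂).atTop_mul_const hx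
  have hL₁ : Tendsto (fun n => (∑ i ∈ range (p₁ n), σ i ^ α) / (normConst σt α (p₂ n) * x) ^ α)
      atTop (𝓝 0) := by
    have h := (ha.div_const x).rpow_const (p := α) (Or.inr hα₁.le)
    rw [zero_div, Real.zero_rpow hα₁.ne'] at h
    refine h.congr fun n => ?_
    rw [sum_rpow_div_rpow_eq (fun i => (hσ₀ i).1.le) hα₁.ne' _ (by positivity [ha₂ n]), div_div]
  have hL₂ : Tendsto (fun n => (∑ j ∈ range (p₂ n), σt j ^ α) / (normConst σt α (p₂ n) * x) ^ α)
      atTop (𝓝 (x⁻¹ ^ α)) := by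
    refine tendsto_const_nhds.congr fun n => ?_
    rw [sum_rpow_div_rpow_eq (fun j => (hσt₀ j).1.le) hα₁.ne' _ (by positivity [ha₂ n]),
      div_mul_cancel_left₀ (ha₂ n).ne']
  have hQ := tendsto_measureReal_Qmax_le hZm hfm hgm hfbdd hgbdd (hC₁.trans_le hC₁₂) hσ₀ hσt₀
    hε₁m hε₂m hid₁ hid₂ hindep hα₁ hα₂ htail₁ htail₂ hX₁ hX₂ hp₁pos hp₂pos ht hL₁ hL₂
  rw [frechetCDF, if_pos hx, Real.rpow_neg hx.le, ← Real.inv_rpow hx.le]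
  simpa only [neg_zero, Real.exp_zero, one_mul, measureReal_def] using hQ

/-- Prop. 2, Case 2, second subcase: `α₁ = α₂ = α` and `p₁/p₂ → 0` imply `a₁/a₂ → 0` and `P(Q ≤ a₂ x) → Ψ_α(x)` for all `x > 0`. -/
theorem prop2_case2_sub2
    {Ω : Type*} [MeasurableSpace Ω] (P : Measure Ω) [IsProbabilityMeasure P]
    (d : ℕ) (Z : Ω → Fin d → ℝ) (hZm : Measurable Z)
    (f g : ℕ → (Fin d → ℝ) → ℝ) (hfm : ∀ i, Measurable (f i)) (hgm : ∀ j, Measurable (g j))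
    (hfbdd : ∀ᵐ ω ∂P, ∃ M : ℝ, ∀ i, |f i (Z ω)| ≤ M)
    (hgbdd : ∀ᵐ ω ∂P, ∃ M : ℝ, ∀ j, |g j (Z ω)| ≤ M)
    (C₁ C₂ : ℝ) (hC₁ : 0 < C₁) (hC₁₂ : C₁ ≤ C₂)
    (σ σt : ℕ → ℝ) (hσ : ∀ i, σ i ∈ Set.Icc C₁ C₂) (hσt : ∀ j, σt j ∈ Set.Icc C₁ C₂)
    (α₁ α₂ : ℝ) (hα₁ : 0 < α₁) (hα₂ : 0 < α₂)
    (ε₁ ε₂ : ℕ → Ω → ℝ) (hε₁m : ∀ i, Measurable (ε₁ i)) (hε₂m : ∀ j, Measurable (ε₂ j))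
    (hid₁ : ∀ i, IdentDistrib (ε₁ i) (ε₁ 0) P P)
    (hid₂ : ∀ j, IdentDistrib (ε₂ j) (ε₂ 0) P P)
    (hindep : iIndepFun (m := fun i => mixCodomMeasurableSpace d i) (mixFun Z ε₁ ε₂) P)
    (htail₁ : Tendsto (fun x : ℝ => x ^ α₁ * (P {ω | x < ε₁ 0 ω}).toReal) atTop (nhds 1))
    (htail₂ : Tendsto (fun x : ℝ => x ^ α₂ * (P {ω | x < ε₂ 0 ω}).toReal) atTop (nhds 1))
    (X₁ X₂ : ℕ → Ω → ℝ)
    (hX₁ : ∀ i ω, X₁ i ω = f i (Z ω) + σ i * ε₁ i ω)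
    (hX₂ : ∀ j ω, X₂ j ω = g j (Z ω) + σt j * ε₂ j ω)
    (p₁ p₂ : ℕ → ℕ) (hp₁pos : ∀ n, 0 < p₁ n) (hp₂pos : ∀ n, 0 < p₂ n)
    (hp₁ : Tendsto (fun n => (p₁ n : ℝ)) atTop atTop)
    (hp₂ : Tendsto (fun n => (p₂ n : ℝ)) atTop atTop)
    (α : ℝ) (hα₁α : α₁ = α) (hα₂α : α₂ = α)
    (hratio : Tendsto (fun n => (p₁ n : ℝ) / (p₂ n : ℝ)) atTop (nhds 0)) :
    Tendsto (fun n => normConst σ α₁ (p₁ n) / normConst σt α₂ (p₂ n)) atTop (nhds 0) ∧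
    ∀ x : ℝ, 0 < x →
      Tendsto (fun n => (P {ω | Qmax X₁ X₂ (p₁ n) (p₂ n) ω ≤ normConst σt α₂ (p₂ n) * x}).toReal) atTop (nhds (frechetCDF α x)) :=
  prop2_case2_sub2_general P d Z hZm f g hfm hgm hfbdd hgbdd C₁ C₂ hC₁ hC₁₂ σ σt hσ hσt α₁ α₂ hα₁
    hα₂ ε₁ ε₂ hε₁m hε₂m hid₁ hid₂ hindep htail₁ htail₂ X₁ X₂ hX₁ hX₂ p₁ p₂ hp₁pos hp₂pos hp₂ α hα₁α
    hα₂α hratio
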